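/- arXiv:1810.11669 — 2 statements merged into one kernel-verified Lean document; each statement's English description precedes it below -/
import Mathlib

section
/- A nonnegative square matrix B is reducible if and only if ρ(B) equals the spectral radius of some proper principal submatrix of B. -/
open scoped Classical
open Matrix

/-- Spectral radius: largest modulus of (complex) eigenvalues, i.e. roots of the
characteristic polynomial of the complexified matrix. -/
noncomputable def specRad {m : Type*} [Fintype m] [DecidableEq m] (M : Matrix m m ℝ) : ℝ :=
  sSup {r : ℝ | ∃ μ : ℂ, (M.map Complex.ofReal).charpoly.IsRoot μ ∧ r = ‖μ‖}

/-- Irreducibility of a matrix: the associated digraph is strongly connected. -/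
def Irred {n : ℕ} (M : Matrix (Fin n) (Fin n) ℝ) : Prop :=
  ∀ i j : Fin n, Relation.ReflTransGen (fun a b => M a b ≠ 0) i j

/-- Outdegree of a vertex in a digraph on `Fin n`. -/
noncomputable def outdeg {n : ℕ} (G : Fin n → Fin n → Prop) (i : Fin n) : ℕ :=
  (Finset.univ.filter (fun j => G i j)).card

/-- Indegree of a vertex. -/
noncomputable def indeg {n : ℕ} (G : Fin n → Fin n → Prop) (i : Fin n) : ℕ :=
  (Finset.univ.filter (fun j => G j i)).card

/-- The matrix `A_α(G) = α D(G) + (1-α) A(G)`. -/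
noncomputable def Aalpha {n : ℕ} (α : ℝ) (G : Fin n → Fin n → Prop) :
    Matrix (Fin n) (Fin n) ℝ :=
  α • Matrix.diagonal (fun i => (outdeg G i : ℝ)) +
    (1 - α) • (Matrix.of fun i j => if G i j then (1 : ℝ) else 0)

/-- The `A_α` spectral radius of a digraph. -/
noncomputable def lamAlpha {n : ℕ} (α : ℝ) (G : Fin n → Fin n → Prop) : ℝ :=
  specRad (Aalpha α G)

/-- Strong connectivity of a digraph. -/
def SConn {n : ℕ} (G : Fin n → Fin n → Prop) : Prop :=
  ∀ u v : Fin n, Relation.ReflTransGen G u v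

/-- Isomorphism of digraphs on `Fin n`. -/
def DIso {n : ℕ} (G H : Fin n → Fin n → Prop) : Prop :=
  ∃ e : Equiv.Perm (Fin n), ∀ u v, G u v ↔ H (e u) (e v)

/-- The directed cycle on `Fin n`. -/
def dirCycle (n : ℕ) : Fin n → Fin n → Prop :=
  fun i j => j.val = (i.val + 1) % n


/-- Deleting a set of vertices from a digraph. -/
def delVerts {n : ℕ} (G : Fin n → Fin n → Prop) (S : Finset (Fin n)) :
    Fin n → Fin n → Prop :=
  fun a b => G a b ∧ a ∉ S ∧ b ∉ S

/-- The digraph obtained by deleting the vertices of `S` is strongly connected. -/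
def SConnAvoid {n : ℕ} (G : Fin n → Fin n → Prop) (S : Finset (Fin n)) : Prop :=
  ∀ u v : Fin n, u ∉ S → v ∉ S → Relation.ReflTransGen (delVerts G S) u v

/-- The vertex connectivity of `G` equals `k`. -/
def vertexConnIs {n : ℕ} (G : Fin n → Fin n → Prop) (k : ℕ) : Prop :=
  (∃ S : Finset (Fin n), S.card = k ∧ ¬ SConnAvoid G S) ∧
    ∀ S : Finset (Fin n), ¬ SConnAvoid G S → k ≤ S.card

/-- Deleting a set of arcs from a digraph. -/
def delArcs {n : ℕ} (G : Fin n → Fin n → Prop) (S : Finset (Fin n × Fin n)) :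
    Fin n → Fin n → Prop :=
  fun a b => G a b ∧ (a, b) ∉ S

/-- The arc connectivity of `G` equals `k`. -/
def arcConnIs {n : ℕ} (G : Fin n → Fin n → Prop) (k : ℕ) : Prop :=
  (∃ S : Finset (Fin n × Fin n), S.card = k ∧ ¬ SConn (delArcs G S)) ∧
    ∀ S : Finset (Fin n × Fin n), ¬ SConn (delArcs G S) → k ≤ S.card

/-- `G` contains a directed cycle of length `g`. -/
def hasCycleLen {n : ℕ} (G : Fin n → Fin n → Prop) (g : ℕ) : Prop :=
  ∃ c : Fin g → Fin n, Function.Injective c ∧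
    ∀ i : Fin g, G (c i) (c ⟨(i.val + 1) % g, Nat.mod_lt _ i.pos⟩)

/-- The girth of `G` equals `g`. -/
def girthIs {n : ℕ} (G : Fin n → Fin n → Prop) (g : ℕ) : Prop :=
  hasCycleLen G g ∧ ∀ m, 0 < m → m < g → ¬ hasCycleLen G m

/-- The clique number of `G` equals `d`. -/
def cliqueNumIs {n : ℕ} (G : Fin n → Fin n → Prop) (d : ℕ) : Prop :=
  (∃ S : Finset (Fin n), S.card = d ∧ ∀ u ∈ S, ∀ v ∈ S, u ≠ v → G u v ∧ G v u) ∧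
    ∀ S : Finset (Fin n), (∀ u ∈ S, ∀ v ∈ S, u ≠ v → G u v ∧ G v u) → S.card ≤ d

/-- The digraph `C_{n,g}`: the directed cycle `v_1 … v_g v_1` (indices `0,…,g-1`)
together with the directed path `v_g v_{g+1} … v_n v_1`. -/
def Cng (n g : ℕ) : Fin n → Fin n → Prop := fun i j =>
  j.val = i.val + 1 ∨ (i.val = g - 1 ∧ j.val = 0) ∨ (i.val = n - 1 ∧ j.val = 0)

/-- `C'_{n,g} = C_{n,g} - {(v_n, v_1)} + {(v_n, v_g)}`. -/
def Cng' (n g : ℕ) : Fin n → Fin n → Prop := fun i j =>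
  j.val = i.val + 1 ∨ (i.val = g - 1 ∧ j.val = 0) ∨ (i.val = n - 1 ∧ j.val = g - 1)

/-- The digraph `B_{n,d}`: a complete digraph on the `d` vertices
`{0} ∪ {n-d+1, …, n-1}` together with the directed path `v_1 v_2 … v_{n-d+2}`
(indices `0, 1, …, n-d+1`). -/
def Bnd (n d : ℕ) : Fin n → Fin n → Prop := fun i j =>
  (j.val = i.val + 1 ∧ j.val ≤ n - d + 1) ∨
    (i ≠ j ∧ (i.val = 0 ∨ n - d + 1 ≤ i.val) ∧ (j.val = 0 ∨ n - d + 1 ≤ j.val))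

/-- `B'_{n,d} = B_{n,d} - {(v_{n-d+1}, v_{n-d+2})} + {(v_{n-d+1}, v_1)}`. -/
def Bnd' (n d : ℕ) : Fin n → Fin n → Prop := fun i j =>
  (j.val = i.val + 1 ∧ j.val ≤ n - d) ∨ (i.val = n - d ∧ j.val = 0) ∨
    (i ≠ j ∧ (i.val = 0 ∨ n - d + 1 ≤ i.val) ∧ (j.val = 0 ∨ n - d + 1 ≤ j.val))

/-- The digraph `K(n,k,m)`: parts `K_m` (indices `< m`), `K_k` (indices in `[m, m+k)`),
`K_{n-k-m}` (indices `≥ m+k`); all parts complete, `K_k` joined both ways to the others,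
and all one-way arcs from `K_m` to `K_{n-k-m}`. -/
def Knkm (n k m : ℕ) : Fin n → Fin n → Prop := fun i j =>
  i ≠ j ∧ ¬(m + k ≤ i.val ∧ j.val < m)

open Polynomial Filter Topology

/-!
If `B` is reducible, some vertex `i` of its digraph does not reach every vertex, and the set `S` of
vertices reachable from `i` satisfies `B (S × Sᶜ) = 0`. So the characteristic polynomial of `B` is
the product of those of `B[S]` and `B[Sᶜ]`, and an eigenvalue of maximal modulus of `B` is one of
`B[S]` or of `B[Sᶜ]`.

Conversely, let `B` be irreducible with `ρ(B[S]) = ρ(B) =: ρ` for a proper nonempty `S`. The moduli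
of an eigenvector of `B[S]` for an eigenvalue of modulus `ρ`, extended by zero, form a vector
`y ≥ 0`, `y ≠ 0`, with `ρ y ≤ B y`. Some power `P = (1 + B) ^ N` is entrywise positive and commutes
with `B`. If `ρ y ≠ B y`, then `u = P y > 0` satisfies `(ρ + ε) u ≤ B u` for some `ε > 0`, against
the Collatz–Wielandt bound: `s u ≤ B u` with `u > 0` gives `s ^ k ≤ ‖B ^ k‖`, hence `s ≤ ρ` by
Gelfand's formula. Thus `B y = ρ y`, and `P y = (1 + ρ) ^ N y` is positive everywhere although `y`
vanishes off `S`.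
-/

section SpectralRadius

variable {ι κ : Type*} [Fintype ι] [DecidableEq ι] [Fintype κ] [DecidableEq κ]

lemma specRad_nonneg (M : Matrix ι ι ℝ) : 0 ≤ specRad M :=
  Real.sSup_nonneg fun _ ⟨μ, _, h⟩ => h ▸ norm_nonneg μ

lemma norm_le_specRad {M : Matrix ι ι ℝ} {μ : ℂ} (h : (M.map Complex.ofReal).charpoly.IsRoot μ) :
    ‖μ‖ ≤ specRad M := by
  refine le_csSup ?_ ⟨μ, h, rfl⟩
  refine (((finite_setOfPred_isRoot (charpoly_monic (M.map Complex.ofReal)).ne_zero).image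
    (‖·‖ : ℂ → ℝ)).subset ?_).bddAbove
  rintro _ ⟨ν, hν, rfl⟩
  exact ⟨ν, hν, rfl⟩

lemma exists_isRoot_norm_eq_specRad [Nonempty ι] (M : Matrix ι ι ℝ) :
    ∃ μ : ℂ, (M.map Complex.ofReal).charpoly.IsRoot μ ∧ ‖μ‖ = specRad M := by
  have hdeg : 0 < (M.map Complex.ofReal).charpoly.degree := by
    rw [charpoly_degree_eq_dim]
    exact_mod_cast Fintype.card_pos
  obtain ⟨μ, hμ, hmax⟩ := Set.exists_max_image _ (‖·‖ : ℂ → ℝ)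
    (finite_setOfPred_isRoot (charpoly_monic _).ne_zero) (Complex.exists_root hdeg)
  exact ⟨μ, hμ, le_antisymm (norm_le_specRad hμ)
    (Real.sSup_le (fun _ ⟨ν, hν, hr⟩ => hr ▸ hmax ν hν) (norm_nonneg μ))⟩

lemma specRad_le_of_charpoly_dvd {M : Matrix ι ι ℝ} {N : Matrix κ κ ℝ}
    (h : (M.map Complex.ofReal).charpoly ∣ (N.map Complex.ofReal).charpoly) :
    specRad M ≤ specRad N :=
  Real.sSup_le (fun _ ⟨_, hμ, hr⟩ => hr ▸ norm_le_specRad (hμ.dvd h)) (specRad_nonneg N)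

lemma spectralRadius_map_ofReal_le (M : Matrix ι ι ℝ) :
    spectralRadius ℂ (M.map Complex.ofReal) ≤ ENNReal.ofReal (specRad M) := by
  refine iSup₂_le fun μ hμ => ?_
  rw [← ENNReal.ofReal_coe_nnreal, coe_nnnorm]
  exact ENNReal.ofReal_le_ofReal <| norm_le_specRad (mem_spectrum_iff_isRoot_charpoly.mp hμ)

lemma exists_mulVec_eq_smul_of_isRoot_charpoly {M : Matrix ι ι ℂ} {μ : ℂ}
    (h : M.charpoly.IsRoot μ) : ∃ v ≠ 0, M *ᵥ v = μ • v := by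
  rw [IsRoot, eval_charpoly, ← exists_mulVec_eq_zero_iff] at h
  obtain ⟨v, hv, h⟩ := h
  rw [sub_mulVec, sub_eq_zero] at h
  exact ⟨v, hv, by simp [← h]⟩

end SpectralRadius

section NonnegMatrix

variable {ι : Type*} [Fintype ι]

lemma mulVec_mono_of_nonneg {B : Matrix ι ι ℝ} (hB : ∀ i j, 0 ≤ B i j) {v w : ι → ℝ}
    (h : v ≤ w) : B *ᵥ v ≤ B *ᵥ w :=
  fun i => dotProduct_le_dotProduct_of_nonneg_left h (hB i)

lemma mulVec_nonneg_of_nonneg {B : Matrix ι ι ℝ} (hB : ∀ i j, 0 ≤ B i j) {v : ι → ℝ}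
    (hv : 0 ≤ v) : 0 ≤ B *ᵥ v :=
  fun i => dotProduct_nonneg_of_nonneg (hB i) hv

lemma mulVec_pos_of_pos {P : Matrix ι ι ℝ} (hP : ∀ i j, 0 < P i j) {v : ι → ℝ} (hv : 0 ≤ v)
    {j : ι} (hj : 0 < v j) (i : ι) : 0 < (P *ᵥ v) i :=
  (mul_pos (hP i j) hj).trans_le <|
    Finset.single_le_sum (fun k _ => mul_nonneg (hP i k).le (hv k)) (Finset.mem_univ j)

lemma le_mul_apply_of_nonneg {P Q : Matrix ι ι ℝ} (hP : ∀ i j, 0 ≤ P i j)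
    (hQ : ∀ i j, 0 ≤ Q i j) (i k j : ι) : P i k * Q k j ≤ (P * Q) i j :=
  Finset.single_le_sum (f := fun k => P i k * Q k j) (fun k _ => mul_nonneg (hP i k) (hQ k j))
    (Finset.mem_univ k)

lemma norm_map_ofReal_mulVec_apply_le {A : Matrix ι ι ℝ} (hA : ∀ i j, 0 ≤ A i j) (v : ι → ℂ)
    (i : ι) : ‖(A.map Complex.ofReal *ᵥ v) i‖ ≤ (A *ᵥ fun j => ‖v j‖) i :=
  calc ‖∑ j, (A i j : ℂ) * v j‖ ≤ ∑ j, ‖(A i j : ℂ) * v j‖ := norm_sum_le _ _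
    _ = (A *ᵥ fun j => ‖v j‖) i := by simp [mulVec, dotProduct, abs_of_nonneg (hA i _)]

lemma submatrix_mulVec_apply_eq_mulVec_extend {R : Type*} [NonUnitalNonAssocSemiring R]
    (M : Matrix ι ι R) (S : Finset ι) (x : S → R) (a : S) :
    (M.submatrix ((↑) : S → ι) (↑) *ᵥ x) a = (M *ᵥ Function.extend (↑) x 0) a := by
  simp only [mulVec, dotProduct, submatrix_apply]
  rw [← Finset.sum_subset (Finset.subset_univ S) fun j _ hj => by
    rw [Function.extend_val_apply' hj, Pi.zero_apply, mul_zero], ← Finset.sum_coe_sort S]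
  simp

end NonnegMatrix

lemma extend_val_nonneg {ι : Type*} {p : ι → Prop} {f : Subtype p → ℝ} (hf : 0 ≤ f) :
    0 ≤ Function.extend Subtype.val f 0 := fun i => by
  by_cases hi : p i
  · rw [Function.extend_val_apply hi]
    exact hf _
  · rw [Function.extend_val_apply' hi]

lemma exists_pos_smul_le {ι : Type*} [Finite ι] (u : ι → ℝ) {w : ι → ℝ} (hw : ∀ i, 0 < w i) :
    ∃ ε : ℝ, 0 < ε ∧ ε • u ≤ w := by
  have hsmall : ∀ i, ∀ᶠ ε in 𝓝[>] (0 : ℝ), ε * u i < w i := fun i =>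
    (((continuous_id.mul continuous_const).tendsto' 0 0 (zero_mul _)).eventually_lt_const
      (hw i)).filter_mono nhdsWithin_le_nhds
  obtain ⟨ε, hε, h⟩ := (eventually_mem_nhdsWithin.and (eventually_all.2 hsmall)).exists
  exact ⟨ε, hε, fun i => (h i).le⟩

lemma exists_finset_forall_not_of_not_reflTransGen {ι : Type*} [Fintype ι] {r : ι → ι → Prop}
    {i j : ι} (h : ¬ Relation.ReflTransGen r i j) :
    ∃ S : Finset ι, i ∈ S ∧ j ∉ S ∧ ∀ a ∈ S, ∀ b ∉ S, ¬ r a b := by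
  refine ⟨Finset.univ.filter (Relation.ReflTransGen r i), by simp [Relation.ReflTransGen.refl],
    by simpa using h, fun a ha b hb hab => hb ?_⟩
  simp only [Finset.mem_filter, Finset.mem_univ, true_and] at ha ⊢
  exact ha.tail hab

section Reducible

variable {ι : Type*} [Fintype ι] [DecidableEq ι]

lemma charpoly_eq_charpoly_submatrix_mul_compl {R : Type*} [CommRing R] (M : Matrix ι ι R)
    (S : Finset ι) (h : ∀ a ∈ S, ∀ b ∉ S, M a b = 0) :
    M.charpoly = (M.submatrix ((↑) : S → ι) (↑)).charpoly *
      (M.submatrix ((↑) : ↥Sᶜ → ι) (↑)).charpoly := by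
  let e : S ⊕ ↥Sᶜ ≃ ι := (Equiv.sumCongr (Equiv.refl _)
    (Equiv.subtypeEquivRight fun _ => Finset.mem_compl)).trans (Equiv.sumCompl (· ∈ S))
  have hblocks : reindex e.symm e.symm M = fromBlocks (M.submatrix ((↑) : S → ι) (↑)) 0
      (M.submatrix ((↑) : ↥Sᶜ → ι) (↑)) (M.submatrix ((↑) : ↥Sᶜ → ι) (↑)) := by
    ext (a | a) (b | b)
    all_goals simp [e]
    exact h a a.2 b (Finset.mem_compl.mp b.2)
  rw [← charpoly_reindex e.symm, hblocks, charpoly_fromBlocks_zero₁₂]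

lemma specRad_submatrix_eq_or_compl [Nonempty ι] (M : Matrix ι ι ℝ) (S : Finset ι)
    (h : ∀ a ∈ S, ∀ b ∉ S, M a b = 0) :
    specRad (M.submatrix ((↑) : S → ι) (↑)) = specRad M ∨
      specRad (M.submatrix ((↑) : ↥Sᶜ → ι) (↑)) = specRad M := by
  have hfac := charpoly_eq_charpoly_submatrix_mul_compl (M.map Complex.ofReal) S
    fun a ha b hb => by simp [h a ha b hb]
  obtain ⟨μ, hμ, hμM⟩ := exists_isRoot_norm_eq_specRad M
  rw [IsRoot, hfac, eval_mul, mul_eq_zero] at hμ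
  rcases hμ with hμ | hμ
  · exact .inl <| le_antisymm (specRad_le_of_charpoly_dvd (Dvd.intro _ hfac.symm))
      (hμM ▸ norm_le_specRad hμ)
  · exact .inr <| le_antisymm (specRad_le_of_charpoly_dvd (Dvd.intro_left _ hfac.symm))
      (hμM ▸ norm_le_specRad hμ)

end Reducible

lemma exists_specRad_submatrix_eq_of_not_irred {n : ℕ} {B : Matrix (Fin n) (Fin n) ℝ}
    (h : ¬ Irred B) :
    ∃ S : Finset (Fin n), S.Nonempty ∧ S ≠ Finset.univ ∧
      specRad (B.submatrix ((↑) : S → Fin n) (↑)) = specRad B := by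
  simp only [Irred, not_forall] at h
  obtain ⟨i, j, hij⟩ := h
  obtain ⟨S, hi, hj, hS⟩ := exists_finset_forall_not_of_not_reflTransGen hij
  have : Nonempty (Fin n) := ⟨i⟩
  rcases specRad_submatrix_eq_or_compl B S (fun a ha b hb => not_not.mp (hS a ha b hb))
    with hS | hSc
  · exact ⟨S, ⟨i, hi⟩, fun h => hj (h ▸ Finset.mem_univ j), hS⟩
  · exact ⟨Sᶜ, ⟨j, Finset.mem_compl.mpr hj⟩,
      fun h => Finset.mem_compl.mp (h ▸ Finset.mem_univ i) hi, hSc⟩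

section CollatzWielandt

variable {ι : Type*} [Fintype ι] [DecidableEq ι]

attribute [local instance] Matrix.linftyOpNormedRing Matrix.linftyOpNormedAlgebra

lemma linfty_opNorm_map_ofReal (M : Matrix ι ι ℝ) : ‖M.map Complex.ofReal‖ = ‖M‖ := by
  simp [linfty_opNorm_def]

lemma le_specRad_of_pow_le_norm (M : Matrix ι ι ℝ) {s : ℝ} (hs : 0 ≤ s)
    (h : ∀ k, s ^ k ≤ ‖M ^ k‖) : s ≤ specRad M := by
  have hlower : ∀ k : ℕ, k ≠ 0 → s ≤ ‖(M.map Complex.ofReal) ^ k‖ ^ (1 / k : ℝ) := fun k hk => by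
    have hmap : M.map Complex.ofReal ^ k = (M ^ k).map Complex.ofReal :=
      (map_pow Complex.ofRealHom.mapMatrix M k).symm
    rw [hmap, linfty_opNorm_map_ofReal, ← Real.pow_rpow_inv_natCast hs hk, one_div]
    exact Real.rpow_le_rpow (pow_nonneg hs k) (h k) (by positivity)
  have hρ : ENNReal.ofReal s ≤ spectralRadius ℂ (M.map Complex.ofReal) :=
    ge_of_tendsto (spectrum.pow_norm_pow_one_div_tendsto_nhds_spectralRadius _)
      ((eventually_ne_atTop 0).mono fun k hk => ENNReal.ofReal_le_ofReal (hlower k hk))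
  exact (ENNReal.ofReal_le_ofReal_iff (specRad_nonneg M)).mp
    (hρ.trans (spectralRadius_map_ofReal_le M))

lemma le_specRad_of_smul_le_mulVec [Nonempty ι] {B : Matrix ι ι ℝ} (hB : ∀ i j, 0 ≤ B i j)
    {u : ι → ℝ} (hu : ∀ i, 0 < u i) {s : ℝ} (h : s • u ≤ B *ᵥ u) : s ≤ specRad B := by
  rcases lt_or_ge s 0 with hs | hs
  · exact hs.le.trans (specRad_nonneg B)
  have hpow : ∀ k : ℕ, s ^ k • u ≤ B ^ k *ᵥ u := by
    intro k
    induction k with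
    | zero => simp
    | succ k ih =>
      calc s ^ (k + 1) • u = s ^ k • (s • u) := by rw [pow_succ, mul_smul]
        _ ≤ s ^ k • (B *ᵥ u) := smul_le_smul_of_nonneg_left h (pow_nonneg hs k)
        _ = B *ᵥ (s ^ k • u) := (mulVec_smul B _ u).symm
        _ ≤ B *ᵥ (B ^ k *ᵥ u) := mulVec_mono_of_nonneg hB ih
        _ = B ^ (k + 1) *ᵥ u := by rw [mulVec_mulVec, pow_succ']
  refine le_specRad_of_pow_le_norm B hs fun k => ?_
  obtain ⟨i, hi⟩ := Finite.exists_max u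
  have hnorm_u : ‖u‖ ≤ u i := (pi_norm_le_iff_of_nonneg (hu i).le).2 fun j => by
    rw [Real.norm_of_nonneg (hu j).le]
    exact hi j
  refine le_of_mul_le_mul_right ?_ (hu i)
  calc s ^ k * u i ≤ (B ^ k *ᵥ u) i := hpow k i
    _ ≤ ‖B ^ k *ᵥ u‖ := (le_abs_self _).trans (norm_le_pi_norm (B ^ k *ᵥ u) i)
    _ ≤ ‖B ^ k‖ * ‖u‖ := linfty_opNorm_mulVec _ _
    _ ≤ ‖B ^ k‖ * u i := mul_le_mul_of_nonneg_left hnorm_u (norm_nonneg _)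

end CollatzWielandt

lemma one_add_apply_nonneg {ι : Type*} [DecidableEq ι] {B : Matrix ι ι ℝ}
    (hB : ∀ i j, 0 ≤ B i j) (i j : ι) : 0 ≤ (1 + B) i j := by
  rw [Matrix.add_apply, one_apply]
  split_ifs <;> linarith [hB i j]

section Irreducible

variable {ι : Type*} [Fintype ι] [DecidableEq ι] {B : Matrix ι ι ℝ}

lemma one_add_pow_apply_monotone (hB : ∀ i j, 0 ≤ B i j) (i j : ι) :
    Monotone fun k => ((1 + B) ^ k : Matrix ι ι ℝ) i j := by
  refine monotone_nat_of_le_succ fun k => ?_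
  have hjj : 1 ≤ (1 + B) j j := by simp [hB j j]
  calc ((1 + B) ^ k) i j ≤ ((1 + B) ^ k) i j * (1 + B) j j :=
        le_mul_of_one_le_right (pow_apply_nonneg (one_add_apply_nonneg hB) k i j) hjj
    _ ≤ ((1 + B) ^ (k + 1)) i j := by
      rw [pow_succ]
      exact le_mul_apply_of_nonneg (pow_apply_nonneg (one_add_apply_nonneg hB) k)
        (one_add_apply_nonneg hB) i j j

lemma exists_one_add_pow_apply_pos (hB : ∀ i j, 0 ≤ B i j) {i j : ι}
    (h : Relation.ReflTransGen (fun a b => B a b ≠ 0) i j) :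
    ∃ k, 0 < ((1 + B) ^ k : Matrix ι ι ℝ) i j := by
  induction h with
  | refl => exact ⟨0, by simp⟩
  | @tail b c _ hbc ih =>
    obtain ⟨k, hk⟩ := ih
    have hedge : 0 < (1 + B) b c := by
      rw [Matrix.add_apply, one_apply]
      split_ifs <;> linarith [(hB b c).lt_of_ne' hbc]
    refine ⟨k + 1, (mul_pos hk hedge).trans_le ?_⟩
    rw [pow_succ]
    exact le_mul_apply_of_nonneg (pow_apply_nonneg (one_add_apply_nonneg hB) k)
      (one_add_apply_nonneg hB) i b c

lemma exists_one_add_pow_pos (hB : ∀ i j, 0 ≤ B i j)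
    (hirr : ∀ i j, Relation.ReflTransGen (fun a b => B a b ≠ 0) i j) :
    ∃ N, ∀ i j, 0 < ((1 + B) ^ N : Matrix ι ι ℝ) i j := by
  choose k hk using fun p : ι × ι => exists_one_add_pow_apply_pos hB (hirr p.1 p.2)
  exact ⟨Finset.univ.sup k, fun i j => (hk (i, j)).trans_le <|
    one_add_pow_apply_monotone hB i j (Finset.le_sup (Finset.mem_univ (i, j)))⟩

lemma one_add_pow_mulVec_of_mulVec_eq_smul {y : ι → ℝ} {r : ℝ} (h : B *ᵥ y = r • y) (k : ℕ) :
    (1 + B) ^ k *ᵥ y = (1 + r) ^ k • y := by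
  induction k with
  | zero => simp
  | succ k ih =>
    rw [pow_succ', ← mulVec_mulVec, ih, mulVec_smul, add_mulVec, one_mulVec, h]
    module

lemma pos_of_mulVec_eq_smul (hB : ∀ i j, 0 ≤ B i j)
    (hirr : ∀ i j, Relation.ReflTransGen (fun a b => B a b ≠ 0) i j) {y : ι → ℝ} (hy : 0 ≤ y)
    {j : ι} (hj : 0 < y j) {r : ℝ} (hr : 0 ≤ r) (h : B *ᵥ y = r • y) (i : ι) : 0 < y i := by
  obtain ⟨N, hN⟩ := exists_one_add_pow_pos hB hirr
  have hpos := mulVec_pos_of_pos hN hy hj i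
  rw [one_add_pow_mulVec_of_mulVec_eq_smul h, Pi.smul_apply, smul_eq_mul] at hpos
  exact pos_of_mul_pos_right hpos (by positivity)

lemma mulVec_eq_specRad_smul_of_le (hB : ∀ i j, 0 ≤ B i j)
    (hirr : ∀ i j, Relation.ReflTransGen (fun a b => B a b ≠ 0) i j) {y : ι → ℝ} (hy : 0 ≤ y)
    {j : ι} (hj : 0 < y j) (h : specRad B • y ≤ B *ᵥ y) : B *ᵥ y = specRad B • y := by
  have : Nonempty ι := ⟨j⟩
  by_contra hne
  set ρ := specRad B
  obtain ⟨N, hN⟩ := exists_one_add_pow_pos hB hirr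
  set P := (1 + B) ^ N
  set w := B *ᵥ y - ρ • y
  have hw : 0 ≤ w := sub_nonneg.2 h
  obtain ⟨i, hi⟩ : ∃ i, 0 < w i := by
    by_contra! hw'
    exact hne (sub_eq_zero.1 (le_antisymm hw' hw))
  have hu : ∀ i, 0 < (P *ᵥ y) i := mulVec_pos_of_pos hN hy hj
  have hBu : B *ᵥ (P *ᵥ y) = ρ • (P *ᵥ y) + P *ᵥ w := by
    have hcomm : Commute B P := ((Commute.one_right B).add_right (Commute.refl B)).pow_right N
    rw [mulVec_mulVec, hcomm.eq, ← mulVec_mulVec, ← mulVec_smul, ← mulVec_add, add_sub_cancel]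
  obtain ⟨ε, hε, hεu⟩ := exists_pos_smul_le (P *ᵥ y) (mulVec_pos_of_pos hN hw hi)
  have hsub : (ρ + ε) • (P *ᵥ y) ≤ B *ᵥ (P *ᵥ y) := by
    rw [hBu, add_smul]
    exact add_le_add le_rfl hεu
  linarith [le_specRad_of_smul_le_mulVec hB hu hsub]

lemma norm_smul_extend_le_mulVec (hB : ∀ i j, 0 ≤ B i j) {S : Finset ι}
    {μ : ℂ} {v : S → ℂ} (hv : (B.submatrix ((↑) : S → ι) (↑)).map Complex.ofReal *ᵥ v = μ • v) :
    ‖μ‖ • Function.extend ((↑) : S → ι) (fun a => ‖v a‖) (0 : ι → ℝ) ≤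
      B *ᵥ Function.extend (↑) (fun a => ‖v a‖) 0 := by
  intro i
  by_cases hi : i ∈ S
  · obtain ⟨a, rfl⟩ : ∃ a : S, ↑a = i := ⟨⟨i, hi⟩, rfl⟩
    rw [Pi.smul_apply, Subtype.val_injective.extend_apply, smul_eq_mul, ← norm_mul,
      ← submatrix_mulVec_apply_eq_mulVec_extend]
    calc ‖μ * v a‖ = ‖((B.submatrix ((↑) : S → ι) (↑)).map Complex.ofReal *ᵥ v) a‖ := by
          rw [hv, Pi.smul_apply, smul_eq_mul]
      _ ≤ _ := norm_map_ofReal_mulVec_apply_le (fun _ _ => hB _ _) v _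
  · rw [Pi.smul_apply, Function.extend_val_apply' hi, Pi.zero_apply, smul_zero]
    exact mulVec_nonneg_of_nonneg hB (extend_val_nonneg fun a => norm_nonneg (v a)) i

lemma specRad_submatrix_ne_of_irred (hB : ∀ i j, 0 ≤ B i j)
    (hirr : ∀ i j, Relation.ReflTransGen (fun a b => B a b ≠ 0) i j) {S : Finset ι}
    (hS : S.Nonempty) (hSu : S ≠ Finset.univ) :
    specRad (B.submatrix ((↑) : S → ι) (↑)) ≠ specRad B := by
  intro heq
  have : Nonempty S := hS.coe_sort
  obtain ⟨μ, hμ, hμS⟩ := exists_isRoot_norm_eq_specRad (B.submatrix ((↑) : S → ι) (↑))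
  obtain ⟨v, hv0, hv⟩ := exists_mulVec_eq_smul_of_isRoot_charpoly hμ
  set y := Function.extend ((↑) : S → ι) (fun a => ‖v a‖) 0
  have hy : 0 ≤ y := extend_val_nonneg fun a => norm_nonneg (v a)
  obtain ⟨a, ha⟩ := Function.ne_iff.mp hv0
  have hya : 0 < y a := by
    rw [show y a = ‖v a‖ from Subtype.val_injective.extend_apply _ _ a]
    exact norm_pos_iff.2 ha
  obtain ⟨j, hj⟩ : ∃ j, j ∉ S := by simpa [Finset.eq_univ_iff_forall] using hSu
  have hle : specRad B • y ≤ B *ᵥ y := heq ▸ hμS ▸ norm_smul_extend_le_mulVec hB hv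
  have hyj := pos_of_mulVec_eq_smul hB hirr hy hya (specRad_nonneg B)
    (mulVec_eq_specRad_smul_of_le hB hirr hy hya hle) j
  simp [y, Function.extend_val_apply' hj] at hyj

end Irreducible

theorem stmt8_general {n : ℕ} (B : Matrix (Fin n) (Fin n) ℝ)
    (hB : ∀ i j, 0 ≤ B i j) :
    ¬ Irred B ↔ ∃ S : Finset (Fin n), S.Nonempty ∧ S ≠ Finset.univ ∧
      specRad (B.submatrix (fun i : {x // x ∈ S} => (i : Fin n))
        (fun i : {x // x ∈ S} => (i : Fin n))) = specRad B :=
  ⟨exists_specRad_submatrix_eq_of_not_irred,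
    fun ⟨_, hS, hSu, heq⟩ hirr => specRad_submatrix_ne_of_irred hB hirr hS hSu heq⟩

/-- a nonnegative square matrix is reducible iff its spectral radius is
attained by a proper principal submatrix. -/
theorem stmt8 {n : ℕ} (hn : 2 ≤ n) (B : Matrix (Fin n) (Fin n) ℝ)
    (hB : ∀ i j, 0 ≤ B i j) :
    ¬ Irred B ↔ ∃ S : Finset (Fin n), S.Nonempty ∧ S ≠ Finset.univ ∧
      specRad (B.submatrix (fun i : {x // x ∈ S} => (i : Fin n))
        (fun i : {x // x ∈ S} => (i : Fin n))) = specRad B :=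
  stmt8_general B hB
end

section
/- Let G be a strongly connected digraph on n vertices other than the directed cycle, let (v_i, v_j) ∈ E(G), and let w be a new vertex. Form the digraph G^w by deleting the arc (v_i, v_j) and adding arcs (v_i, w) and (w, v_j) (subdividing the arc). Then for all α ∈ [0,1), λ_α(G) ≥ λ_α(G^w). -/
open scoped Classical
open Matrix

/-!
Let `x > 0` be a Perron vector of `A_α(G)`, `A_α(G) x = r x`; it exists because `A_α(G)` is
nonnegative and irreducible, and is found by maximising the Collatz–Wielandt quotient. Every vertex
of `G` has an out-neighbour, so `r ≥ 1`. Giving the new vertex `w` the value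
`c = (1 - α) x_j / (r - α) ≤ x_j` extends `x` to a positive vector `y` with `A_α(G^w) y ≤ r y`.
A positive sub-invariant vector of a nonnegative matrix bounds the modulus of each of its
eigenvalues, so `λ_α(G^w) ≤ r ≤ λ_α(G)`.
-/

open Finset

section SpectralRadius

variable {m : Type*} [Fintype m]

theorem norm_le_of_mulVec_eq_smul_of_mulVec_le {M : Matrix m m ℝ} (hM : ∀ a b, 0 ≤ M a b)
    {y : m → ℝ} (hy : ∀ a, 0 < y a) {r : ℝ} (hr : ∀ a, (M *ᵥ y) a ≤ r * y a)
    {μ : ℂ} {z : m → ℂ} (hz : z ≠ 0) (hMz : M.map Complex.ofReal *ᵥ z = μ • z) : ‖μ‖ ≤ r := by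
  obtain ⟨l, hl⟩ := Function.ne_iff.1 hz
  obtain ⟨k, -, hk⟩ := exists_max_image univ (fun a => ‖z a‖ / y a) ⟨l, mem_univ l⟩
  set t := ‖z k‖ / y k
  have hzb : ∀ b, ‖z b‖ ≤ t * y b := fun b =>
    (div_le_iff₀ (hy b)).1 (hk b (mem_univ b))
  have ht : 0 < t := (div_pos (norm_pos_iff.2 hl) (hy l)).trans_le (hk l (mem_univ l))
  have key : ‖μ‖ * (t * y k) ≤ r * (t * y k) := calc
    ‖μ‖ * (t * y k) = ‖(M.map Complex.ofReal *ᵥ z) k‖ := by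
      rw [hMz, Pi.smul_apply, smul_eq_mul, norm_mul, div_mul_cancel₀ _ (hy k).ne']
    _ ≤ ∑ b, M k b * ‖z b‖ := by
      refine (norm_sum_le _ _).trans_eq (sum_congr rfl fun b _ => ?_)
      simp [abs_of_nonneg (hM k b)]
    _ ≤ ∑ b, M k b * (t * y b) := by gcongr with b; exacts [hM k b, hzb b]
    _ = t * (M *ᵥ y) k := by
      simp only [mulVec, dotProduct, mul_sum]
      exact sum_congr rfl fun b _ => by ring
    _ ≤ r * (t * y k) := by nlinarith [hr k]
  exact le_of_mul_le_mul_right key (mul_pos ht (hy k))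

variable [DecidableEq m]

theorem Matrix.isRoot_charpoly_iff_exists_mulVec_eq_smul {K : Type*} [Field K]
    (M : Matrix m m K) (μ : K) :
    M.charpoly.IsRoot μ ↔ ∃ v ≠ 0, M *ᵥ v = μ • v := by
  rw [Polynomial.IsRoot, eval_charpoly, ← exists_mulVec_eq_zero_iff]
  simp [sub_mulVec, sub_eq_zero, eq_comm]

theorem bddAbove_specRad_set (M : Matrix m m ℝ) :
    BddAbove {r : ℝ | ∃ μ : ℂ, (M.map Complex.ofReal).charpoly.IsRoot μ ∧ r = ‖μ‖} := by
  refine (((Polynomial.finite_setOfPred_isRoot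
    (M.map Complex.ofReal).charpoly_monic.ne_zero).image (‖·‖)).subset ?_).bddAbove
  rintro r ⟨μ, hμ, rfl⟩
  exact ⟨μ, hμ, rfl⟩

theorem le_specRad_of_mulVec_eq_smul {M : Matrix m m ℝ} {r : ℝ} {x : m → ℝ} (hr : 0 ≤ r)
    (hx : x ≠ 0) (hMx : M *ᵥ x = r • x) : r ≤ specRad M := by
  refine le_csSup (bddAbove_specRad_set M) ⟨r, ?_, by simp [abs_of_nonneg hr]⟩
  refine (Matrix.isRoot_charpoly_iff_exists_mulVec_eq_smul _ _).2
    ⟨Complex.ofReal ∘ x, fun h => hx (funext fun a => by simpa using congrFun h a), ?_⟩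
  ext a
  exact (RingHom.map_mulVec Complex.ofRealHom M x a).symm.trans (by simp [hMx])

theorem specRad_le_of_mulVec_le [Nonempty m] {M : Matrix m m ℝ} (hM : ∀ a b, 0 ≤ M a b)
    {y : m → ℝ} (hy : ∀ a, 0 < y a) {r : ℝ} (hr : ∀ a, (M *ᵥ y) a ≤ r * y a) :
    specRad M ≤ r := by
  obtain ⟨a⟩ := ‹Nonempty m›
  have hMy : 0 ≤ (M *ᵥ y) a := sum_nonneg fun b _ => mul_nonneg (hM a b) (hy b).le
  refine Real.sSup_le ?_ (nonneg_of_mul_nonneg_left (hMy.trans (hr a)) (hy a))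
  rintro s ⟨μ, hμ, rfl⟩
  obtain ⟨z, hz, hMz⟩ := (Matrix.isRoot_charpoly_iff_exists_mulVec_eq_smul _ _).1 hμ
  exact norm_le_of_mulVec_eq_smul_of_mulVec_le hM hy hr hz hMz

end SpectralRadius

section Perron

variable {m : Type*} [Fintype m]

theorem exists_gt_forall_mul_le [Nonempty m] {y w : m → ℝ} (hy : ∀ a, 0 < y a) {r : ℝ}
    (h : ∀ a, r * y a < w a) : ∃ r' > r, ∀ a, r' * y a ≤ w a := by
  obtain ⟨k, -, hk⟩ := exists_min_image univ (fun a => w a / y a) univ_nonempty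
  exact ⟨w k / y k, (lt_div_iff₀ (hy k)).2 (h k),
    fun a => (le_div_iff₀ (hy a)).1 (hk a (mem_univ a))⟩

theorem mulVec_pos_of_forall_pos {P : Matrix m m ℝ} (hP : ∀ a b, 0 < P a b) {v : m → ℝ}
    (hv : ∀ a, 0 ≤ v a) (hv0 : v ≠ 0) (a : m) : 0 < (P *ᵥ v) a := by
  obtain ⟨b, hb⟩ := Function.ne_iff.1 hv0
  exact sum_pos' (fun c _ => mul_nonneg (hP a c).le (hv c))
    ⟨b, mem_univ b, mul_pos (hP a b) ((hv b).lt_of_ne' hb)⟩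

/-- The Collatz–Wielandt feasible set; the largest `ρ` on it is the Perron root. -/
def collatzSet (M : Matrix m m ℝ) : Set (ℝ × (m → ℝ)) :=
  {p | 0 ≤ p.1 ∧ p.2 ∈ stdSimplex ℝ m ∧ ∀ a, p.1 * p.2 a ≤ (M *ᵥ p.2) a}

variable {M : Matrix m m ℝ}

theorem fst_le_of_mem_collatzSet (hM : ∀ a b, 0 ≤ M a b) {p : ℝ × (m → ℝ)}
    (hp : p ∈ collatzSet M) : p.1 ≤ ∑ a, ∑ b, M a b := by
  obtain ⟨-, hx, hle⟩ := hp
  calc p.1 = ∑ a, p.1 * p.2 a := by rw [← mul_sum, hx.2, mul_one]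
    _ ≤ ∑ a, (M *ᵥ p.2) a := sum_le_sum fun a _ => hle a
    _ ≤ ∑ a, ∑ b, M a b := sum_le_sum fun a _ => sum_le_sum fun b _ =>
      mul_le_of_le_one_right (hM a b) (mem_Icc_of_mem_stdSimplex hx b).2

theorem isCompact_collatzSet (hM : ∀ a b, 0 ≤ M a b) : IsCompact (collatzSet M) := by
  refine (isCompact_Icc.prod (isCompact_stdSimplex ℝ m)).of_isClosed_subset ?_
    fun p hp => ⟨⟨hp.1, fst_le_of_mem_collatzSet hM hp⟩, hp.2.1⟩
  simp only [collatzSet, Set.ofPred_and, Set.ofPred_forall]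
  exact (isClosed_le continuous_const continuous_fst).inter
    (((isClosed_stdSimplex ℝ m).preimage continuous_snd).inter
      (isClosed_iInter fun a => isClosed_le (by fun_prop) (by fun_prop)))

theorem nonempty_collatzSet [Nonempty m] [DecidableEq m] (hM : ∀ a b, 0 ≤ M a b) :
    (collatzSet M).Nonempty := by
  obtain ⟨b⟩ := ‹Nonempty m›
  refine ⟨(0, Pi.single b 1), le_rfl, single_mem_stdSimplex ℝ b, fun a => ?_⟩
  simpa [mulVec_single_one] using hM a b

theorem mem_collatzSet_of_pos [Nonempty m] {ρ : ℝ} (hρ : 0 ≤ ρ) {y : m → ℝ}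
    (hy : ∀ a, 0 < y a) (h : ∀ a, ρ * y a ≤ (M *ᵥ y) a) :
    (ρ, (∑ a, y a)⁻¹ • y) ∈ collatzSet M := by
  have hs : 0 < ∑ a, y a := sum_pos (fun a _ => hy a) univ_nonempty
  refine ⟨hρ, ⟨fun a => ?_, ?_⟩, fun a => ?_⟩
  · exact mul_nonneg (inv_nonneg.2 hs.le) (hy a).le
  · simp only [Pi.smul_apply, smul_eq_mul, ← mul_sum, inv_mul_cancel₀ hs.ne']
  · simp only [mulVec_smul, Pi.smul_apply, smul_eq_mul, mul_left_comm ρ]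
    exact mul_le_mul_of_nonneg_left (h a) (inv_nonneg.2 hs.le)

theorem mulVec_eq_smul_of_isMaxOn_collatzSet [Nonempty m] [DecidableEq m] {P : Matrix m m ℝ}
    (hP : ∀ a b, 0 < P a b) (hPM : Commute P M) {p : ℝ × (m → ℝ)} (hp : p ∈ collatzSet M)
    (hmax : IsMaxOn Prod.fst (collatzSet M) p) : M *ᵥ p.2 = p.1 • p.2 := by
  obtain ⟨hr, ⟨hx0, hx1⟩, hle⟩ := hp
  have hx : p.2 ≠ 0 := fun h => by simp [h] at hx1
  by_contra hne
  -- `P` turns the nonzero slack `M x - ρ x ≥ 0` into a strictly positive slack for `P x`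
  have hlt : ∀ a, p.1 * (P *ᵥ p.2) a < (M *ᵥ (P *ᵥ p.2)) a := fun a => by
    have := mulVec_pos_of_forall_pos (v := M *ᵥ p.2 - p.1 • p.2) hP
      (fun a => sub_nonneg.2 (hle a)) (sub_ne_zero.2 hne) a
    rwa [mulVec_sub, mulVec_smul, mulVec_mulVec, hPM.eq, ← mulVec_mulVec, Pi.sub_apply,
      Pi.smul_apply, smul_eq_mul, sub_pos] at this
  have hy := mulVec_pos_of_forall_pos hP hx0 hx
  obtain ⟨r', hr', hr'le⟩ := exists_gt_forall_mul_le hy hlt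
  exact (hmax (mem_collatzSet_of_pos (hr.trans hr'.le) hy hr'le)).not_gt hr'

variable [DecidableEq m]

theorem exists_pow_apply_pos_of_reflTransGen (hM : ∀ a b, 0 ≤ M a b) {a b : m}
    (h : Relation.ReflTransGen (fun a b => 0 < M a b) a b) : ∃ k, 0 < (M ^ k) a b := by
  induction h with
  | refl => exact ⟨0, by simp⟩
  | @tail c d _ hcd ih =>
    obtain ⟨k, hk⟩ := ih
    refine ⟨k + 1, ?_⟩
    rw [pow_succ, mul_apply]
    exact sum_pos' (fun e _ => mul_nonneg (pow_apply_nonneg hM k a e) (hM e d))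
      ⟨c, mem_univ c, mul_pos hk hcd⟩

theorem exists_sum_pow_apply_pos (hM : ∀ a b, 0 ≤ M a b)
    (hirr : ∀ a b, Relation.ReflTransGen (fun a b => 0 < M a b) a b) :
    ∃ N, ∀ a b, 0 < (∑ k ∈ range N, M ^ k) a b := by
  choose k hk using fun p : m × m => exists_pow_apply_pos_of_reflTransGen hM (hirr p.1 p.2)
  refine ⟨univ.sup k + 1, fun a b => ?_⟩
  rw [Matrix.sum_apply]
  exact sum_pos' (fun l _ => pow_apply_nonneg hM l a b)
    ⟨k (a, b), mem_range.2 (Nat.lt_succ_of_le (le_sup (mem_univ (a, b)))), hk (a, b)⟩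

theorem exists_pos_mulVec_eq_smul [Nonempty m] (hM : ∀ a b, 0 ≤ M a b)
    (hirr : ∀ a b, Relation.ReflTransGen (fun a b => 0 < M a b) a b) :
    ∃ (r : ℝ) (x : m → ℝ), (∀ a, 0 < x a) ∧ M *ᵥ x = r • x := by
  obtain ⟨N, hP⟩ := exists_sum_pow_apply_pos hM hirr
  have hPM : Commute (∑ k ∈ range N, M ^ k) M :=
    Commute.sum_left _ _ _ fun k _ => (Commute.refl M).pow_left k
  obtain ⟨p, hp, hmax⟩ := (isCompact_collatzSet hM).exists_isMaxOn (nonempty_collatzSet hM)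
    continuous_fst.continuousOn
  have hx : p.2 ≠ 0 := fun h => by simpa [h] using hp.2.1.2
  refine ⟨p.1, _, mulVec_pos_of_forall_pos hP hp.2.1.1 hx, ?_⟩
  rw [mulVec_mulVec, ← hPM.eq, ← mulVec_mulVec,
    mulVec_eq_smul_of_isMaxOn_collatzSet hP hPM hp hmax, mulVec_smul]

end Perron

section Aalpha

variable {n : ℕ} {α : ℝ} {G : Fin n → Fin n → Prop}

theorem outdeg_eq_sum (G : Fin n → Fin n → Prop) (u : Fin n) :
    (outdeg G u : ℝ) = ∑ v, if G u v then 1 else 0 := by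
  rw [outdeg, sum_boole]

theorem Aalpha_mulVec_apply (α : ℝ) (G : Fin n → Fin n → Prop) (x : Fin n → ℝ) (u : Fin n) :
    (Aalpha α G *ᵥ x) u = α * outdeg G u * x u + (1 - α) * ∑ v, if G u v then x v else 0 := by
  rw [Aalpha, add_mulVec, smul_mulVec, smul_mulVec, Pi.add_apply, Pi.smul_apply, Pi.smul_apply,
    mulVec_diagonal, smul_eq_mul, smul_eq_mul, mul_assoc]
  simp [mulVec, dotProduct]

theorem Aalpha_nonneg (hα0 : 0 ≤ α) (hα1 : α ≤ 1) (G : Fin n → Fin n → Prop) (u v : Fin n) :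
    0 ≤ Aalpha α G u v := by
  have : 0 ≤ 1 - α := sub_nonneg.2 hα1
  simp only [Aalpha, Matrix.add_apply, Matrix.smul_apply, diagonal_apply, of_apply, smul_eq_mul]
  split_ifs <;> positivity

theorem Aalpha_pos_of_adj (hα0 : 0 ≤ α) (hα1 : α < 1) {u v : Fin n} (huv : G u v) :
    0 < Aalpha α G u v := by
  have : 0 < 1 - α := sub_pos.2 hα1
  simp only [Aalpha, Matrix.add_apply, Matrix.smul_apply, diagonal_apply, of_apply, smul_eq_mul,
    if_pos huv]
  split_ifs <;> positivity

theorem reflTransGen_Aalpha_pos (hα0 : 0 ≤ α) (hα1 : α < 1) (hSC : SConn G) (u v : Fin n) :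
    Relation.ReflTransGen (fun a b => 0 < Aalpha α G a b) u v :=
  Relation.ReflTransGen.mono (fun _ _ => Aalpha_pos_of_adj hα0 hα1) _ _ (hSC u v)

theorem SConn.exists_adj (hSC : SConn G) {i j : Fin n} (hij : G i j) (u : Fin n) : ∃ v, G u v := by
  rcases (hSC u i).cases_head with rfl | ⟨v, huv, -⟩
  exacts [⟨j, hij⟩, ⟨v, huv⟩]

theorem one_le_of_Aalpha_mulVec_eq_smul [Nonempty (Fin n)] (hα1 : α ≤ 1)
    (hout : ∀ u, ∃ v, G u v) {x : Fin n → ℝ} (hx : ∀ a, 0 < x a) {r : ℝ}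
    (hAx : Aalpha α G *ᵥ x = r • x) : 1 ≤ r := by
  obtain ⟨u, -, hu⟩ := exists_min_image univ x univ_nonempty
  obtain ⟨v, huv⟩ := hout u
  have hdeg : (1 : ℝ) ≤ outdeg G u :=
    Nat.one_le_cast.2 (card_pos.2 ⟨v, mem_filter.2 ⟨mem_univ v, huv⟩⟩)
  have h1α : 0 ≤ 1 - α := sub_nonneg.2 hα1
  -- at a coordinate where `x` is smallest, every out-neighbour contributes at least `x u`
  refine le_of_mul_le_mul_right ?_ (hx u)
  calc 1 * x u ≤ outdeg G u * x u := mul_le_mul_of_nonneg_right hdeg (hx u).le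
    _ = α * outdeg G u * x u + (1 - α) * ∑ v, if G u v then x u else 0 := by
      have : (∑ v, if G u v then x u else 0) = outdeg G u * x u := by
        simp only [outdeg_eq_sum, sum_mul, ite_mul, one_mul, zero_mul]
      rw [this]
      ring
    _ ≤ α * outdeg G u * x u + (1 - α) * ∑ v, if G u v then x v else 0 := by
      gcongr with v
      split_ifs
      exacts [hu v (mem_univ v), le_rfl]
    _ = r * x u := by rw [← Aalpha_mulVec_apply, hAx, Pi.smul_apply, smul_eq_mul]

end Aalpha

section Subdivision

variable {n : ℕ}

def subdivide (G : Fin n → Fin n → Prop) (i j : Fin n) : Fin (n + 1) → Fin (n + 1) → Prop :=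
  fun a b => (∃ u v : Fin n, a = Fin.castSucc u ∧ b = Fin.castSucc v ∧ G u v ∧
      ¬(u = i ∧ v = j)) ∨
    (a = Fin.castSucc i ∧ b = Fin.last n) ∨ (a = Fin.last n ∧ b = Fin.castSucc j)

variable {G : Fin n → Fin n → Prop} {i j : Fin n}

@[simp]
theorem subdivide_castSucc_castSucc {u v : Fin n} :
    subdivide G i j u.castSucc v.castSucc ↔ G u v ∧ ¬(u = i ∧ v = j) := by
  simp [subdivide, Fin.castSucc_ne_last]

@[simp]
theorem subdivide_castSucc_last {u : Fin n} : subdivide G i j u.castSucc (Fin.last n) ↔ u = i := by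
  simp [subdivide, Fin.castSucc_ne_last, (Fin.castSucc_ne_last _).symm]

@[simp]
theorem subdivide_last_castSucc {v : Fin n} : subdivide G i j (Fin.last n) v.castSucc ↔ v = j := by
  simp [subdivide, Fin.castSucc_ne_last, (Fin.castSucc_ne_last _).symm, eq_comm]

@[simp]
theorem not_subdivide_last_last : ¬ subdivide G i j (Fin.last n) (Fin.last n) := by
  simp [subdivide, (Fin.castSucc_ne_last _).symm]

theorem sum_subdivide_castSucc (hij : G i j) (w : Fin (n + 1) → ℝ) (u : Fin n) :
    (∑ b, if subdivide G i j u.castSucc b then w b else 0) =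
      (∑ v, if G u v then w v.castSucc else 0) +
        if u = i then w (Fin.last n) - w j.castSucc else 0 := by
  rw [Fin.sum_univ_castSucc]
  by_cases hu : u = i
  · subst hu
    have hsplit : ∀ v, (if G u v then w v.castSucc else 0) =
        (if G u v ∧ ¬v = j then w v.castSucc else 0) + if v = j then w j.castSucc else 0 := by
      intro v
      by_cases hv : v = j <;> simp [hv, hij]
    simp [hsplit, sum_add_distrib]
  · simp [hu]

theorem sum_subdivide_last (w : Fin (n + 1) → ℝ) :
    (∑ b, if subdivide G i j (Fin.last n) b then w b else 0) = w j.castSucc := by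
  simp [Fin.sum_univ_castSucc]

theorem outdeg_subdivide_castSucc (hij : G i j) (u : Fin n) :
    (outdeg (subdivide G i j) u.castSucc : ℝ) = outdeg G u := by
  rw [outdeg_eq_sum, outdeg_eq_sum, sum_subdivide_castSucc hij (fun _ => 1)]
  simp

theorem outdeg_subdivide_last : (outdeg (subdivide G i j) (Fin.last n) : ℝ) = 1 := by
  rw [outdeg_eq_sum, sum_subdivide_last (fun _ => 1)]

/-- The value `c` at the new vertex solves its own eigen-equation `α c + (1 - α) x j = r c`;
`r ≥ 1` makes `c ≤ x j`, so the row of `i`, which now sees `c` instead of `x j`, only drops. -/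
theorem Aalpha_subdivide_mulVec_snoc_le {α : ℝ} (hα1 : α < 1) (hij : G i j) {x : Fin n → ℝ}
    (hxj : 0 ≤ x j) {r : ℝ} (hr : 1 ≤ r) (hAx : Aalpha α G *ᵥ x = r • x) (a : Fin (n + 1)) :
    (Aalpha α (subdivide G i j) *ᵥ Fin.snoc x ((1 - α) * x j / (r - α))) a ≤
      r * (Fin.snoc x ((1 - α) * x j / (r - α)) : Fin (n + 1) → ℝ) a := by
  set c := (1 - α) * x j / (r - α)
  have hrα : 0 < r - α := by linarith
  have hc : (r - α) * c = (1 - α) * x j := mul_div_cancel₀ _ hrα.ne'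
  have hcx : c ≤ x j := by
    rw [div_le_iff₀ hrα]
    nlinarith
  refine Fin.lastCases ?_ (fun u => ?_) a
  · rw [Aalpha_mulVec_apply, outdeg_subdivide_last, sum_subdivide_last]
    simp only [Fin.snoc_last, Fin.snoc_castSucc]
    linarith
  · have hu := congrFun hAx u
    rw [Aalpha_mulVec_apply, Pi.smul_apply, smul_eq_mul] at hu
    rw [Aalpha_mulVec_apply, outdeg_subdivide_castSucc hij, sum_subdivide_castSucc hij]
    simp only [Fin.snoc_last, Fin.snoc_castSucc]
    split_ifs
    · nlinarith [mul_nonneg (sub_nonneg.2 hα1.le) (sub_nonneg.2 hcx)]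
    · linarith

end Subdivision

theorem stmt9_general {n : ℕ} (α : ℝ) (hα0 : 0 ≤ α) (hα1 : α < 1)
    (G : Fin n → Fin n → Prop) (hSC : SConn G)
    (i j : Fin n) (hij : G i j)
    (Gw : Fin (n + 1) → Fin (n + 1) → Prop)
    (hGw : ∀ a b, Gw a b ↔
      ((∃ u v : Fin n, a = Fin.castSucc u ∧ b = Fin.castSucc v ∧ G u v ∧
          ¬(u = i ∧ v = j)) ∨
        (a = Fin.castSucc i ∧ b = Fin.last n) ∨
        (a = Fin.last n ∧ b = Fin.castSucc j))) :
    lamAlpha α Gw ≤ lamAlpha α G := by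
  obtain rfl : Gw = subdivide G i j := funext₂ fun a b => propext (hGw a b)
  have : Nonempty (Fin n) := ⟨i⟩
  obtain ⟨r, x, hx, hAx⟩ :=
    exists_pos_mulVec_eq_smul (Aalpha_nonneg hα0 hα1.le G) (reflTransGen_Aalpha_pos hα0 hα1 hSC)
  have hr : 1 ≤ r := one_le_of_Aalpha_mulVec_eq_smul hα1.le (hSC.exists_adj hij) hx hAx
  have hc : 0 < (1 - α) * x j / (r - α) :=
    div_pos (mul_pos (sub_pos.2 hα1) (hx j)) (by linarith)
  calc lamAlpha α (subdivide G i j) ≤ r :=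
        specRad_le_of_mulVec_le (Aalpha_nonneg hα0 hα1.le _)
          (fun a => Fin.lastCases (by simpa using hc) (by simpa using hx) a)
          (Aalpha_subdivide_mulVec_snoc_le hα1 hij (hx j).le hr hAx)
    _ ≤ lamAlpha α G :=
        le_specRad_of_mulVec_eq_smul (zero_le_one.trans hr) (fun h => (hx i).ne' (by simp [h])) hAx

/-- subdividing an arc of a strongly connected digraph (other than the
directed cycle) does not increase the `A_α` spectral radius. -/
theorem stmt9 {n : ℕ} (α : ℝ) (hα0 : 0 ≤ α) (hα1 : α < 1)
    (G : Fin n → Fin n → Prop) (hGs : ∀ i, ¬ G i i) (hSC : SConn G)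
    (hnc : ¬ DIso G (dirCycle n))
    (i j : Fin n) (hij : G i j)
    (Gw : Fin (n + 1) → Fin (n + 1) → Prop)
    (hGw : ∀ a b, Gw a b ↔
      ((∃ u v : Fin n, a = Fin.castSucc u ∧ b = Fin.castSucc v ∧ G u v ∧
          ¬(u = i ∧ v = j)) ∨
        (a = Fin.castSucc i ∧ b = Fin.last n) ∨
        (a = Fin.last n ∧ b = Fin.castSucc j))) :
    lamAlpha α Gw ≤ lamAlpha α G :=
  stmt9_general α hα0 hα1 G hSC i j hij Gw hGw
end
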